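/- arXiv:1603.06887 — 2 statements merged into one kernel-verified Lean document; each statement's English description precedes it below -/
import Mathlib

section
/- Let Γ be a finite collection of finite sets of even cardinality |Γ| ≥ 2 such that for each S ∈ Γ, the collection Γ−{S} is an hke collection (all with the same α). Then Γ itself is an hke collection. -/
open Finset

/-- Union of a finite collection of finite sets. -/
def collU {α : Type*} [DecidableEq α] (Γ : Finset (Finset α)) : Finset α :=
  Γ.sup id

/-- Intersection of a finite collection of finite sets
(equals the usual intersection when the collection is non-empty). -/
def collI {α : Type*} [DecidableEq α] (Γ : Finset (Finset α)) : Finset α :=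
  (Γ.sup id).filter (fun x => ∀ S ∈ Γ, x ∈ S)

/-- `e Γ = |⋃Γ| + |⋂Γ|` as an integer. -/
def collE {α : Type*} [DecidableEq α] (Γ : Finset (Finset α)) : ℤ :=
  (collU Γ).card + (collI Γ).card

/-- `F` is a hereditary König–Egerváry collection with common cardinality `a`. -/
def IsHKE {α : Type*} [DecidableEq α] (F : Finset (Finset α)) (a : ℕ) : Prop :=
  (∀ S ∈ F, S.card = a) ∧
  ∀ Γ ⊆ F, Γ.Nonempty → collE Γ = 2 * (a : ℤ)

/-!
The function `e(T) = |⋃T| + |⋂T|` satisfies `∑_{T ⊆ Γ} (-1)^|T| e(T) = -e(Γ)` for nonempty `Γ`: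
this is inclusion–exclusion for the union combined with its dual for the intersection.
If `e(T) = 2a` for every nonempty proper `T ⊂ Γ` and `|Γ|` is even, the left side equals
`2a (∑_{T ⊆ Γ} (-1)^|T| - 1 - 1) + e(Γ) = e(Γ) - 4a`, so `e(Γ) = 2a`.
-/

theorem Finset.sum_powerset_filter_forall_neg_one_pow {β : Type*} [DecidableEq β]
    (s : Finset β) (p : β → Prop) [DecidablePred p] :
    ∑ t ∈ s.powerset with ∀ b ∈ t, p b, (-1 : ℤ) ^ #t = if ∀ b ∈ s, ¬p b then 1 else 0 := by
  have h_filter : {t ∈ s.powerset | ∀ b ∈ t, p b} = (s.filter p).powerset := by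
    ext t
    simp only [mem_filter, mem_powerset, subset_iff]
    grind
  simp only [h_filter, sum_powerset_neg_one_pow_card, filter_eq_empty_iff]

section Collections

variable {α : Type*} [DecidableEq α] {Γ T : Finset (Finset α)} {x : α}

@[simp]
lemma mem_collU : x ∈ collU Γ ↔ ∃ S ∈ Γ, x ∈ S := by
  simp [collU, mem_sup]

@[simp]
lemma mem_collI : x ∈ collI Γ ↔ Γ.Nonempty ∧ ∀ S ∈ Γ, x ∈ S := by
  simp only [collI, mem_filter, mem_sup, id]
  grind [Finset.Nonempty]

lemma collU_mono (h : T ⊆ Γ) : collU T ⊆ collU Γ :=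
  sup_mono h

lemma collI_subset_collU : collI Γ ⊆ collU Γ :=
  filter_subset _ _

lemma sum_powerset_neg_one_pow_mul_card {g : Finset (Finset α) → Finset α}
    (hg : ∀ T ⊆ Γ, g T ⊆ collU Γ) :
    ∑ T ∈ Γ.powerset, (-1 : ℤ) ^ #T * #(g T)
      = ∑ x ∈ collU Γ, ∑ T ∈ Γ.powerset with x ∈ g T, (-1 : ℤ) ^ #T := by
  calc ∑ T ∈ Γ.powerset, (-1 : ℤ) ^ #T * #(g T)
      = ∑ T ∈ Γ.powerset, ∑ x ∈ collU Γ, if x ∈ g T then (-1 : ℤ) ^ #T else 0 := by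
        refine sum_congr rfl fun T hT => ?_
        rw [← sum_filter, filter_mem_eq_inter, inter_eq_right.2 (hg T (mem_powerset.1 hT)),
          sum_const, nsmul_eq_mul, mul_comm]
    _ = ∑ x ∈ collU Γ, ∑ T ∈ Γ.powerset with x ∈ g T, (-1 : ℤ) ^ #T := by
        rw [sum_comm]
        simp only [sum_filter]

lemma sum_powerset_filter_mem_collU_neg_one_pow (hΓ : Γ.Nonempty) :
    ∑ T ∈ Γ.powerset with x ∈ collU T, (-1 : ℤ) ^ #T = -if x ∈ collI Γ then 1 else 0 := by
  calc ∑ T ∈ Γ.powerset with x ∈ collU T, (-1 : ℤ) ^ #T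
      = ∑ T ∈ Γ.powerset with ¬∀ S ∈ T, x ∉ S, (-1 : ℤ) ^ #T := by
        simp only [mem_collU, not_forall, not_not, exists_prop]
    _ = ∑ T ∈ Γ.powerset, (-1 : ℤ) ^ #T - ∑ T ∈ Γ.powerset with ∀ S ∈ T, x ∉ S, (-1 : ℤ) ^ #T := by
        rw [eq_sub_iff_add_eq, sum_filter_not_add_sum_filter]
    _ = -if x ∈ collI Γ then 1 else 0 := by
        rw [sum_powerset_neg_one_pow_card_of_nonempty hΓ, sum_powerset_filter_forall_neg_one_pow]
        simp [hΓ]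

lemma sum_powerset_filter_mem_collI_neg_one_pow (hx : x ∈ collU Γ) :
    ∑ T ∈ Γ.powerset with x ∈ collI T, (-1 : ℤ) ^ #T = -1 := by
  have h_filter : {T ∈ Γ.powerset | x ∈ collI T} = {T ∈ Γ.powerset | ∀ S ∈ T, x ∈ S}.erase ∅ := by
    ext T
    simp only [mem_filter, mem_erase, mem_collI, nonempty_iff_ne_empty]
    tauto
  rw [h_filter, sum_erase_eq_sub (by simp), sum_powerset_filter_forall_neg_one_pow]
  simpa using hx

lemma sum_powerset_neg_one_pow_mul_collE (hΓ : Γ.Nonempty) :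
    ∑ T ∈ Γ.powerset, (-1 : ℤ) ^ #T * collE T = -collE Γ := by
  have hU := sum_powerset_neg_one_pow_mul_card (Γ := Γ) (g := collU) fun T hT => collU_mono hT
  have hI := sum_powerset_neg_one_pow_mul_card (Γ := Γ) (g := collI)
    fun T hT => collI_subset_collU.trans (collU_mono hT)
  calc ∑ T ∈ Γ.powerset, (-1 : ℤ) ^ #T * collE T
      = ∑ x ∈ collU Γ, (-if x ∈ collI Γ then 1 else 0 : ℤ) + ∑ x ∈ collU Γ, (-1 : ℤ) := by
        simp only [collE, mul_add, sum_add_distrib, hU, hI]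
        congr 1 <;> refine sum_congr rfl fun x hx => ?_
        · exact sum_powerset_filter_mem_collU_neg_one_pow hΓ
        · exact sum_powerset_filter_mem_collI_neg_one_pow hx
    _ = -collE Γ := by
        rw [sum_neg_distrib, sum_boole, filter_mem_eq_inter,
          inter_eq_right.2 collI_subset_collU]
        simp [collE]

end Collections

lemma eq_of_sum_powerset_neg_one_pow_mul {β : Type*} {s : Finset β}
    (hs : s.Nonempty) (heven : Even #s) (f : Finset β → ℤ) (c : ℤ) (h_empty : f ∅ = 0)
    (h_proper : ∀ t ⊂ s, t.Nonempty → f t = c)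
    (h_sum : ∑ t ∈ s.powerset, (-1 : ℤ) ^ #t * f t = -f s) :
    f s = c := by
  have h_alt : ∑ t ∈ s.powerset, (-1 : ℤ) ^ #t * (f t - c) = f s - 2 * c := by
    rw [sum_eq_add_of_mem ∅ s (empty_mem_powerset s) (mem_powerset_self s) hs.ne_empty.symm
      fun t ht hts => by rw [h_proper t (ssubset_of_subset_of_ne (mem_powerset.1 ht) hts.2)
        (nonempty_iff_ne_empty.2 hts.1), sub_self, mul_zero]]
    rw [heven.neg_one_pow, h_empty, card_empty]
    ring
  have h_split : ∑ t ∈ s.powerset, (-1 : ℤ) ^ #t * f t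
      = c * ∑ t ∈ s.powerset, (-1 : ℤ) ^ #t + ∑ t ∈ s.powerset, (-1 : ℤ) ^ #t * (f t - c) := by
    rw [mul_sum, ← sum_add_distrib]
    exact sum_congr rfl fun t _ => by ring
  rw [h_split, sum_powerset_neg_one_pow_card_of_nonempty hs, h_alt] at h_sum
  linarith

theorem stmt_8_general {α : Type*} [DecidableEq α] (Γ : Finset (Finset α))
    (hcard : 2 ≤ Γ.card) (heven : Even Γ.card) (a : ℕ)
    (hhke : ∀ S ∈ Γ, IsHKE (Γ.erase S) a) :
    IsHKE Γ a := by
  have h_proper : ∀ T ⊂ Γ, T.Nonempty → collE T = 2 * a := by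
    intro T hT hT_ne
    obtain ⟨S, hS, hST⟩ := exists_of_ssubset hT
    exact (hhke S hS).2 T (subset_erase.2 ⟨hT.subset, hST⟩) hT_ne
  refine ⟨fun S hS => ?_, fun T hT hT_ne => ?_⟩
  · obtain ⟨R, hR, hRS⟩ := exists_mem_ne (by omega : 1 < #Γ) S
    exact (hhke R hR).1 S (mem_erase.2 ⟨hRS.symm, hS⟩)
  · obtain rfl | hT := hT.eq_or_ssubset
    · exact eq_of_sum_powerset_neg_one_pow_mul hT_ne heven collE _
        (by simp [collE, collU, collI]) h_proper (sum_powerset_neg_one_pow_mul_collE hT_ne)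
    · exact h_proper T hT hT_ne

theorem stmt_8 {α : Type*} [DecidableEq α] (Γ : Finset (Finset α))
    (hcard : 2 ≤ Γ.card) (heven : Even Γ.card) (a : ℕ) (ha : 0 < a)
    (hhke : ∀ S ∈ Γ, IsHKE (Γ.erase S) a) :
    IsHKE Γ a :=
  stmt_8_general Γ hcard heven a hhke
end

section
/- Let F be a finite collection of finite sets, each of cardinality α > 0, such that |⋂Γ₁ − ⋃Γ₂| = |⋂Γ₂ − ⋃Γ₁| for every partition {Γ₁,Γ₂} of F into two non-empty subcollections, and suppose the same hypothesis holds hereditarily for every subcollection of F. Then |⋃F| + |⋂F| = 2α. -/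
open Finset

section Collections

variable {α : Type*} [DecidableEq α]

@[simp]
lemma collU_singleton (S : Finset α) : collU {S} = S := by
  simp [collU]

@[simp]
lemma collI_singleton (S : Finset α) : collI {S} = S := by
  ext x
  simp [collI]

lemma collU_insert (S : Finset α) (Γ : Finset (Finset α)) :
    collU (insert S Γ) = S ∪ collU Γ := by
  simp [collU]

lemma collI_insert (S : Finset α) {Γ : Finset (Finset α)} (hΓ : Γ.Nonempty) :
    collI (insert S Γ) = S ∩ collI Γ := by
  obtain ⟨T, hT⟩ := hΓ
  ext x
  simp only [collI, sup_insert, sup_eq_union, id, mem_filter, mem_union, mem_sup, mem_insert,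
    mem_inter, forall_eq_or_imp]
  constructor
  · rintro ⟨-, hxS, hxΓ⟩
    exact ⟨hxS, ⟨T, hT, hxΓ T hT⟩, hxΓ⟩
  · rintro ⟨hxS, -, hxΓ⟩
    exact ⟨Or.inl hxS, hxS, hxΓ⟩

lemma card_collU_add_card_collI_insert {S : Finset α} {Γ : Finset (Finset α)}
    (hΓ : Γ.Nonempty) (hdual : (S \ collU Γ).card = (collI Γ \ S).card) :
    (collU (insert S Γ)).card + (collI (insert S Γ)).card =
      (collU Γ).card + (collI Γ).card := by
  have hU : (collU (insert S Γ)).card = (S \ collU Γ).card + (collU Γ).card := by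
    rw [collU_insert, card_sdiff_add_card]
  have hI : (collI (insert S Γ)).card + (collI Γ \ S).card = (collI Γ).card := by
    rw [collI_insert S hΓ, inter_comm]
    exact card_inter_add_card_sdiff _ _
  omega

end Collections

theorem stmt_19_general {α : Type*} [DecidableEq α] (F : Finset (Finset α))
    (hF : F.Nonempty) (a : ℕ)
    (hsize : ∀ S ∈ F, S.card = a)
    (hdual : ∀ Γ ⊆ F, ∀ Γ₁ Γ₂ : Finset (Finset α),
      Γ₁ ∪ Γ₂ = Γ → Disjoint Γ₁ Γ₂ → Γ₁.Nonempty → Γ₂.Nonempty →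
      (collI Γ₁ \ collU Γ₂).card = (collI Γ₂ \ collU Γ₁).card) :
    (collU F).card + (collI F).card = 2 * a := by
  induction hF using Finset.Nonempty.cons_induction with
  | singleton S =>
    simp [hsize S (mem_singleton_self S), two_mul]
  | cons S Γ hS hΓ ih =>
    rw [cons_eq_insert] at hsize hdual ⊢
    have hSΓ : (S \ collU Γ).card = (collI Γ \ S).card := by
      simpa using hdual _ subset_rfl {S} Γ (insert_eq S Γ).symm
        (disjoint_singleton_left.mpr hS) (singleton_nonempty S) hΓ
    rw [card_collU_add_card_collI_insert hΓ hSΓ]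
    exact ih (fun T hT => hsize T (mem_insert_of_mem hT))
      (fun Δ hΔ => hdual Δ (hΔ.trans (subset_insert S Γ)))

theorem stmt_19 {α : Type*} [DecidableEq α] (F : Finset (Finset α))
    (hF : F.Nonempty) (a : ℕ) (ha : 0 < a)
    (hsize : ∀ S ∈ F, S.card = a)
    (hdual : ∀ Γ ⊆ F, ∀ Γ₁ Γ₂ : Finset (Finset α),
      Γ₁ ∪ Γ₂ = Γ → Disjoint Γ₁ Γ₂ → Γ₁.Nonempty → Γ₂.Nonempty →
      (collI Γ₁ \ collU Γ₂).card = (collI Γ₂ \ collU Γ₁).card) :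
    (collU F).card + (collI F).card = 2 * a :=
  stmt_19_general F hF a hsize hdual
end
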